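/- Let z ∈ ℝⁿ with mean z̄ and empirical variance s² = (1/n)∑(zᵢ - z̄)². If min_i √(2ρ)(zᵢ - z̄)/√(n s²) ≥ -1 (assuming s² > 0), then the supremum of ⟨p, z⟩ over probability vectors p with (1/2)‖np - 1‖₂² ≤ ρ equals exactly z̄ + √(2ρ s²/n). -/

import Mathlib

open Finset Real

/-- The robust supremum `sup {⟨p, z⟩ : p a probability vector, (1/2)‖np - 1‖₂² ≤ ρ}`. -/
noncomputable def robustSup (n : ℕ) (ρ : ℝ) (z : Fin n → ℝ) : ℝ :=
  sSup {r : ℝ | ∃ p : Fin n → ℝ, (∀ i, 0 ≤ p i) ∧ (∑ i, p i) = 1 ∧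
    (1 / 2) * (∑ i, ((n : ℝ) * p i - 1) ^ 2) ≤ ρ ∧ r = ∑ i, p i * z i}

/-- The empirical mean of `z`. -/
noncomputable def empMean (n : ℕ) (z : Fin n → ℝ) : ℝ := (1 / n) * ∑ i, z i

/-- The empirical variance of `z`. -/
noncomputable def empVar (n : ℕ) (z : Fin n → ℝ) : ℝ :=
  (1 / n) * ∑ i, (z i - empMean n z) ^ 2

/-!
Write `dᵢ = zᵢ - z̄`, so that `∑ dᵢ = 0` and `∑ dᵢ² = n s²`. For a probability vector `p`,
`n (⟨p, z⟩ - z̄) = ∑ (n pᵢ - 1) dᵢ`, and Cauchy–Schwarz together with the `χ²` constraint bounds this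
by `√(2ρ) · √(n s²)`. The bound is attained by the `p` with `n p - 1 = √(2ρ) d / √(n s²)`, and the
feasibility condition says exactly that this `p` is nonnegative.
-/

section EmpiricalMoments

variable {n : ℕ} (z : Fin n → ℝ)

lemma sum_eq_mul_empMean : ∑ i, z i = n * empMean n z := by
  rcases Nat.eq_zero_or_pos n with rfl | hn
  · simp
  · rw [empMean]; field_simp

lemma sum_sub_empMean : ∑ i, (z i - empMean n z) = 0 := by
  simp [Finset.sum_sub_distrib, sum_eq_mul_empMean]

lemma sum_sq_sub_empMean : ∑ i, (z i - empMean n z) ^ 2 = n * empVar n z := by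
  rcases Nat.eq_zero_or_pos n with rfl | hn
  · simp
  · rw [empVar]; field_simp

lemma empVar_nonneg : 0 ≤ empVar n z := by
  unfold empVar; positivity

lemma mul_sum_mul_sub_empMean {p : Fin n → ℝ} (hp : ∑ i, p i = 1) :
    n * (∑ i, p i * z i - empMean n z) = ∑ i, (n * p i - 1) * (z i - empMean n z) := by
  have h : ∀ i, (n * p i - 1) * (z i - empMean n z)
      = n * (p i * z i) - n * empMean n z * p i - (z i - empMean n z) := fun i => by ring
  rw [Finset.sum_congr rfl fun i _ => h i, Finset.sum_sub_distrib, Finset.sum_sub_distrib,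
    ← Finset.mul_sum, ← Finset.mul_sum, hp, sum_sub_empMean]
  ring

end EmpiricalMoments

theorem sum_mul_le_empMean_add_sqrt {n : ℕ} (hn : 0 < n) {ρ : ℝ} (z : Fin n → ℝ)
    {p : Fin n → ℝ} (hp : ∑ i, p i = 1) (hχ : (1 / 2) * ∑ i, ((n : ℝ) * p i - 1) ^ 2 ≤ ρ) :
    ∑ i, p i * z i ≤ empMean n z + √(2 * ρ * empVar n z / n) := by
  have hn' : (0 : ℝ) < n := by exact_mod_cast hn
  have hcs := Finset.sum_mul_sq_le_sq_mul_sq univ (fun i => (n : ℝ) * p i - 1)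
    (fun i => z i - empMean n z)
  rw [← mul_sum_mul_sub_empMean z hp, sum_sq_sub_empMean] at hcs
  set gap := ∑ i, p i * z i - empMean n z
  have hχ' : (∑ i, ((n : ℝ) * p i - 1) ^ 2) * (n * empVar n z) ≤ 2 * ρ * (n * empVar n z) :=
    mul_le_mul_of_nonneg_right (by linarith) (mul_nonneg (Nat.cast_nonneg n) (empVar_nonneg z))
  have hgap : gap ^ 2 ≤ 2 * ρ * empVar n z / n := by
    rw [le_div_iff₀ hn']
    refine le_of_mul_le_mul_left ?_ hn'
    nlinarith
  linarith [le_abs_self gap, Real.abs_le_sqrt hgap]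

noncomputable def robustMaximizer (n : ℕ) (ρ : ℝ) (z : Fin n → ℝ) : Fin n → ℝ :=
  fun i => 1 / n + √(2 * ρ) * (z i - empMean n z) / (n * √(n * empVar n z))

section Maximizer

variable {n : ℕ} {ρ : ℝ} (z : Fin n → ℝ)

lemma robustMaximizer_nonneg
    (hfeas : ∀ i, √(2 * ρ) * (z i - empMean n z) / √(n * empVar n z) ≥ -1) (i : Fin n) :
    0 ≤ robustMaximizer n ρ z i := by
  have h : robustMaximizer n ρ z i
      = (1 + √(2 * ρ) * (z i - empMean n z) / √(n * empVar n z)) / n := by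
    rw [robustMaximizer]; ring
  rw [h]
  exact div_nonneg (by linarith [hfeas i]) (Nat.cast_nonneg n)

lemma sum_robustMaximizer (hn : 0 < n) : ∑ i, robustMaximizer n ρ z i = 1 := by
  have h : ∀ i, robustMaximizer n ρ z i
      = 1 / n + √(2 * ρ) / (n * √(n * empVar n z)) * (z i - empMean n z) := fun i => by
    rw [robustMaximizer]; ring
  simp only [h, Finset.sum_add_distrib, ← Finset.mul_sum, sum_sub_empMean, mul_zero, add_zero,
    Finset.sum_const, Finset.card_univ, Fintype.card_fin, nsmul_eq_mul]
  field_simp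

lemma mul_robustMaximizer_sub_one (hn : 0 < n) (i : Fin n) :
    n * robustMaximizer n ρ z i - 1
      = √(2 * ρ) / √(n * empVar n z) * (z i - empMean n z) := by
  have hn' : (n : ℝ) ≠ 0 := by positivity
  rw [robustMaximizer]
  field_simp
  ring

lemma chiSq_robustMaximizer_le (hn : 0 < n) (hρ : 0 ≤ ρ) :
    (1 / 2) * ∑ i, ((n : ℝ) * robustMaximizer n ρ z i - 1) ^ 2 ≤ ρ := by
  simp only [mul_robustMaximizer_sub_one z hn, mul_pow, ← Finset.mul_sum, sum_sq_sub_empMean,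
    div_pow, Real.sq_sqrt (by linarith : 0 ≤ 2 * ρ)]
  set S := √(n * empVar n z)
  have hS : S ^ 2 = n * empVar n z :=
    Real.sq_sqrt (mul_nonneg (Nat.cast_nonneg n) (empVar_nonneg z))
  rw [← hS]
  rcases eq_or_ne S 0 with h | h
  · simpa [h] using hρ
  · field_simp
    rfl

lemma sum_robustMaximizer_mul (hn : 0 < n) (hρ : 0 ≤ ρ) :
    ∑ i, robustMaximizer n ρ z i * z i = empMean n z + √(2 * ρ * empVar n z / n) := by
  have hn' : (0 : ℝ) < n := by exact_mod_cast hn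
  have key := mul_sum_mul_sub_empMean z (sum_robustMaximizer z (ρ := ρ) hn)
  simp only [mul_robustMaximizer_sub_one z hn, mul_assoc, ← Finset.mul_sum, ← sq,
    sum_sq_sub_empMean] at key
  have hsqrt : √(2 * ρ * empVar n z / n) = √(2 * ρ) * √(n * empVar n z) / n := by
    calc √(2 * ρ * empVar n z / n) = √(2 * ρ * (n * empVar n z) / n ^ 2) := by
          congr 1; field_simp
      _ = √(2 * ρ) * √(n * empVar n z) / n := by
          rw [Real.sqrt_div' _ (sq_nonneg _), Real.sqrt_sq hn'.le, Real.sqrt_mul (by linarith)]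
  set S := √(n * empVar n z)
  have hS : S ^ 2 = n * empVar n z :=
    Real.sq_sqrt (mul_nonneg (Nat.cast_nonneg n) (empVar_nonneg z))
  rw [← hS] at key
  have hdiv : √(2 * ρ) / S * S ^ 2 = √(2 * ρ) * S := by
    rcases eq_or_ne S 0 with h | h
    · simp [h]
    · field_simp
  rw [hsqrt, ← hdiv, ← key]
  field_simp
  ring

end Maximizer

theorem robustSup_eq_of_forall_le_of_exists {n : ℕ} {ρ : ℝ} {z : Fin n → ℝ} {r : ℝ}
    (hle : ∀ p : Fin n → ℝ, (∀ i, 0 ≤ p i) → ∑ i, p i = 1 →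
      (1 / 2) * ∑ i, ((n : ℝ) * p i - 1) ^ 2 ≤ ρ → ∑ i, p i * z i ≤ r)
    (hattained : ∃ p : Fin n → ℝ, (∀ i, 0 ≤ p i) ∧ ∑ i, p i = 1 ∧
      (1 / 2) * ∑ i, ((n : ℝ) * p i - 1) ^ 2 ≤ ρ ∧ ∑ i, p i * z i = r) :
    robustSup n ρ z = r := by
  obtain ⟨p, hp0, hp1, hχ, rfl⟩ := hattained
  refine IsGreatest.csSup_eq ⟨⟨p, hp0, hp1, hχ, rfl⟩, ?_⟩
  rintro _ ⟨q, hq0, hq1, hqχ, rfl⟩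
  exact hle q hq0 hq1 hqχ

theorem robustSup_eq_mean_add_sqrt_var_of_feasible_general (n : ℕ) (hn : 0 < n) (ρ : ℝ) (hρ : 0 ≤ ρ)
    (z : Fin n → ℝ)
    (hfeas : ∀ i, Real.sqrt (2 * ρ) * (z i - empMean n z)
      / Real.sqrt ((n : ℝ) * empVar n z) ≥ -1) :
    robustSup n ρ z = empMean n z + Real.sqrt (2 * ρ * empVar n z / n) := by
  refine robustSup_eq_of_forall_le_of_exists
    (fun p _ hp1 hχ => sum_mul_le_empMean_add_sqrt hn z hp1 hχ) ⟨robustMaximizer n ρ z,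
      robustMaximizer_nonneg z hfeas, sum_robustMaximizer z hn, chiSq_robustMaximizer_le z hn hρ,
      sum_robustMaximizer_mul z hn hρ⟩

theorem robustSup_eq_mean_add_sqrt_var_of_feasible (n : ℕ) (hn : 0 < n) (ρ : ℝ) (hρ : 0 ≤ ρ)
    (z : Fin n → ℝ) (hs : 0 < empVar n z)
    (hfeas : ∀ i, Real.sqrt (2 * ρ) * (z i - empMean n z)
      / Real.sqrt ((n : ℝ) * empVar n z) ≥ -1) :
    robustSup n ρ z = empMean n z + Real.sqrt (2 * ρ * empVar n z / n) :=
  robustSup_eq_mean_add_sqrt_var_of_feasible_general n hn ρ hρ z hfeas
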